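/- arXiv:1008.3829 — 3 statements merged into one kernel-verified Lean document; each statement's English description precedes it below -/
import Mathlib

section
/- Let 𝕏 be an agenda over m issues, F an aggregation mechanism for 𝕏 over n voters, j an issue, and ε ≥ 0. If DI^j(F) ≤ ε, then there exists an aggregation mechanism H for 𝕏 over n voters with DI^j(H) = 0 and d(F,H) ≤ 2ε. -/
namespace JudgementAggregation

open Finset

open Classical in
noncomputable def prob {α : Type*} (s : Finset α) (P : α → Prop) : ℝ :=
  ((s.filter P).card : ℝ) / s.card

abbrev Opinion (m : ℕ) := Fin m → Bool
abbrev Profile (m n : ℕ) := Fin n → Opinion m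
abbrev Mechanism (m n : ℕ) := Profile m n → Opinion m

/-- The column of all voters' answers on issue `j`. -/
def col {m n : ℕ} (Y : Profile m n) (j : Fin m) : Fin n → Bool := fun i => Y i j

/-- The set of profiles all of whose rows are consistent opinions (i.e. the set 𝕏^n). -/
def profiles {m : ℕ} (X : Finset (Opinion m)) (n : ℕ) : Finset (Profile m n) :=
  Fintype.piFinset fun _ => X

/-- Inconsistency index: probability (uniform over 𝕏^n) that the aggregated opinion
is inconsistent. -/
noncomputable def IC {m n : ℕ} (X : Finset (Opinion m)) (F : Mechanism m n) : ℝ :=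
  prob (profiles X n) (fun Y => F Y ∉ X)

/-- Distance between mechanisms: probability (uniform over 𝕏^n) of disagreement. -/
noncomputable def mdist {m n : ℕ} (X : Finset (Opinion m)) (F G : Mechanism m n) : ℝ :=
  prob (profiles X n) (fun Y => F Y ≠ G Y)

/-- `F` is independent: on consistent profiles, each issue is aggregated from its own column. -/
def Independent {m n : ℕ} (X : Finset (Opinion m)) (F : Mechanism m n) : Prop :=
  ∃ f : Fin m → (Fin n → Bool) → Bool, ∀ Y ∈ profiles X n, ∀ j, F Y j = f j (col Y j)

open Classical in
/-- Dependency index of issue `j`: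
`E_X [ Pr_Y [ (F X)^j ≠ (F Y)^j | Y^j = X^j ] ]`, everything uniform over 𝕏^n. -/
noncomputable def DIj {m n : ℕ} (X : Finset (Opinion m)) (F : Mechanism m n) (j : Fin m) : ℝ :=
  (∑ Y ∈ profiles X n,
      prob ((profiles X n).filter (fun Z => col Z j = col Y j)) (fun Z => F Z j ≠ F Y j))
    / ((profiles X n).card : ℝ)

/-- Dependency index: the maximum of the issue-wise dependency indices. -/
noncomputable def DI {m n : ℕ} (X : Finset (Opinion m)) (F : Mechanism m n) : ℝ :=
  ⨆ j : Fin m, DIj X F j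

/-!
Replace the answer of `F` on issue `j` by the majority answer of `F` among the consistent
profiles with the same column `j`. The new answer depends on that column only, so its dependency
index on `j` vanishes. Wherever `F` disagrees with the majority at `Y`, at least half of the
profiles sharing `Y`'s column disagree with `F Y j`, so the inner probability in `DI^j(F)` is at
least `1/2` there; Markov's inequality then bounds the disagreement probability by `2 DI^j(F)`.
-/

theorem prob_eq_card_div {α : Type*} (s : Finset α) (P : α → Prop) [DecidablePred P] :
    prob s P = (#{x ∈ s | P x} : ℝ) / #s := by
  unfold prob; congr!

theorem prob_nonneg {α : Type*} (s : Finset α) (P : α → Prop) : 0 ≤ prob s P := by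
  unfold prob; positivity

theorem prob_congr {α : Type*} {s : Finset α} {P Q : α → Prop} (h : ∀ x ∈ s, P x ↔ Q x) :
    prob s P = prob s Q := by
  classical
  rw [prob_eq_card_div, prob_eq_card_div, filter_congr h]

theorem prob_eq_zero {α : Type*} {s : Finset α} {P : α → Prop} (h : ∀ x ∈ s, ¬ P x) :
    prob s P = 0 := by
  classical
  rw [prob_eq_card_div, filter_false_of_mem h, card_empty, Nat.cast_zero, zero_div]

/-- Markov's inequality for the uniform distribution on `s`. -/
theorem mul_prob_le_average {α : Type*} {s : Finset α} {P : α → Prop} {p : α → ℝ} {c : ℝ}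
    (hp : ∀ x ∈ s, 0 ≤ p x) (hc : ∀ x ∈ s, P x → c ≤ p x) :
    c * prob s P ≤ (∑ x ∈ s, p x) / #s := by
  classical
  have hcard : c * #{x ∈ s | P x} ≤ ∑ x ∈ s, p x :=
    calc c * #{x ∈ s | P x} = ∑ _ ∈ {x ∈ s | P x}, c := by rw [sum_const, nsmul_eq_mul, mul_comm]
      _ ≤ ∑ x ∈ {x ∈ s | P x}, p x := sum_le_sum fun x hx => (mem_filter.1 hx).elim (hc x)
      _ ≤ ∑ x ∈ s, p x := sum_le_sum_of_subset_of_nonneg (filter_subset _ _) fun x hx _ => hp x hx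
  rw [prob_eq_card_div, ← mul_div_assoc]
  exact div_le_div_of_nonneg_right hcard (Nat.cast_nonneg _)

def majority {α : Type*} (s : Finset α) (f : α → Bool) : Bool :=
  decide (#{x ∈ s | f x = false} ≤ #{x ∈ s | f x = true})

theorem card_le_two_mul_card_ne_of_ne_majority {α : Type*} {s : Finset α} {f : α → Bool} {y : α}
    (h : f y ≠ majority s f) : #s ≤ 2 * #{x ∈ s | f x ≠ f y} := by
  -- `f y` lost the vote, so the answers different from it are at least half of `s`.
  have hsplit : #{x ∈ s | f x = true} + #{x ∈ s | f x = false} = #s := by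
    simpa using card_filter_add_card_filter_not (s := s) (fun x => f x = true)
  cases hy : f y <;> simp_all [majority] <;> omega

theorem half_le_prob_ne_of_ne_majority {α : Type*} {s : Finset α} {f : α → Bool} {y : α}
    (hy : y ∈ s) (h : f y ≠ majority s f) : 1 / 2 ≤ prob s (fun x => f x ≠ f y) := by
  have hs : (0 : ℝ) < #s := by exact_mod_cast card_pos.2 ⟨y, hy⟩
  rw [prob_eq_card_div, div_le_div_iff₀ two_pos hs, one_mul, mul_comm]
  exact_mod_cast card_le_two_mul_card_ne_of_ne_majority h

section Issue

variable {m n : ℕ} (X : Finset (Opinion m)) (F : Mechanism m n) (j : Fin m)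

def columnMajority (c : Fin n → Bool) : Bool :=
  majority {Z ∈ profiles X n | col Z j = c} (fun Z => F Z j)

def majorityOnIssue : Mechanism m n :=
  fun Y => Function.update (F Y) j (columnMajority X F j (col Y j))

theorem DIj_eq_zero_of_eq_comp_col {H : Mechanism m n} (g : (Fin n → Bool) → Bool)
    (hH : ∀ Y, H Y j = g (col Y j)) : DIj X H j = 0 := by
  rw [DIj, sum_eq_zero, zero_div]
  intro Y _
  refine prob_eq_zero fun Z hZ => ?_
  rw [not_not, hH, hH, (mem_filter.1 hZ).2]

theorem DIj_majorityOnIssue : DIj X (majorityOnIssue X F j) j = 0 :=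
  DIj_eq_zero_of_eq_comp_col X j (columnMajority X F j) fun _ => Function.update_self ..

theorem mdist_majorityOnIssue :
    mdist X F (majorityOnIssue X F j) =
      prob (profiles X n) (fun Y => F Y j ≠ columnMajority X F j (col Y j)) :=
  prob_congr fun Y _ => by
    rw [majorityOnIssue, ne_comm, Ne, Function.update_eq_self_iff, eq_comm]

theorem half_mul_mdist_majorityOnIssue_le :
    1 / 2 * mdist X F (majorityOnIssue X F j) ≤ DIj X F j := by
  rw [mdist_majorityOnIssue, DIj]
  refine mul_prob_le_average (fun Y _ => prob_nonneg ..) fun Y hY hne => ?_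
  exact half_le_prob_ne_of_ne_majority (mem_filter.2 ⟨hY, rfl⟩) hne

end Issue

theorem DIj_le_close_general (m n : ℕ) (X : Finset (Opinion m))
    (F : Mechanism m n) (j : Fin m) (ε : ℝ)
    (hDI : DIj X F j ≤ ε) :
    ∃ H : Mechanism m n, DIj X H j = 0 ∧ mdist X F H ≤ 2 * ε :=
  ⟨majorityOnIssue X F j, DIj_majorityOnIssue X F j, by
    linarith [half_mul_mdist_majorityOnIssue_le X F j]⟩

/-- if `DI^j(F) ≤ ε` then `F` is `2ε`-close to a mechanism with `DI^j = 0`. -/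
theorem DIj_le_close (m n : ℕ) (X : Finset (Opinion m)) (hne : X.Nonempty)
    (F : Mechanism m n) (j : Fin m) (ε : ℝ) (hε : 0 ≤ ε)
    (hDI : DIj X F j ≤ ε) :
    ∃ H : Mechanism m n, DIj X H j = 0 ∧ mdist X F H ≤ 2 * ε :=
  DIj_le_close_general m n X F j ε hDI

end JudgementAggregation
end

section
/- Let f : {0,1}^n → {0,1} and let 0 < Δ ≤ 1. If d(f, 0) ≥ Δ, then the number of voters i ∈ {1,…,n} with OSI_i(f) ≤ Δ/n is at most 1 + log₂(1/Δ). -/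
/-! Let `S` be the set of voters of small ignorability and `k = |S|`. A point with `f x = 1` either
has `x i = 1` for every `i ∈ S`, which leaves `2^(n-k)` points, or has `x i = 0` for some `i ∈ S`;
for each `i ∈ S` at most `(Δ/n)·2^(n-1)` points with `x i = 0` have `f x = 1`. Summing over the
`k ≤ n` voters gives `Δ·2^n ≤ 2^(n-k) + Δ·2^(n-1)`, that is `Δ ≤ 2^(1-k)`. -/

namespace JudgementAggregation

open Finset

/-- Distance between boolean functions: probability of disagreement, uniform on `{0,1}^n`. -/
noncomputable def bdist {n : ℕ} (f g : (Fin n → Bool) → Bool) : ℝ :=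
  prob (Finset.univ : Finset (Fin n → Bool)) (fun x => f x ≠ g x)

/-- The (zero-)ignorability of voter `i` on `f`: `Pr[f(x) = 1 | x_i = 0]`. -/
noncomputable def osi {n : ℕ} (i : Fin n) (f : (Fin n → Bool) → Bool) : ℝ :=
  prob (Finset.univ.filter (fun x : Fin n → Bool => x i = false)) (fun x => f x = true)

lemma prob_eq {α : Type*} (s : Finset α) (P : α → Prop) [DecidablePred P] :
    prob s P = (#(s.filter P) : ℝ) / #s := by
  unfold prob
  rw [Finset.filter_congr_decidable]

theorem card_filter_forall_mem_eq {ι α : Type*} [Fintype ι] [DecidableEq ι] [Fintype α]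
    [DecidableEq α] (S : Finset ι) (a : α) :
    #{x : ι → α | ∀ i ∈ S, x i = a} = Fintype.card α ^ (Fintype.card ι - #S) := by
  have hpi : ({x : ι → α | ∀ i ∈ S, x i = a} : Finset (ι → α)) =
      Fintype.piFinset (fun i => if i ∈ S then {a} else univ) := by
    ext x
    simp only [mem_filter, mem_univ, true_and, Fintype.mem_piFinset]
    refine ⟨fun h i => ?_, fun h i hi => by simpa [hi] using h i⟩
    split_ifs with hi
    · exact mem_singleton.mpr (h i hi)
    · exact mem_univ _
  calc #{x : ι → α | ∀ i ∈ S, x i = a}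
      = ∏ i, if i ∈ Sᶜ then Fintype.card α else 1 := by
        rw [hpi, Fintype.card_piFinset]
        refine Fintype.prod_congr _ _ fun i => ?_
        by_cases hi : i ∈ S <;> simp [hi]
    _ = Fintype.card α ^ (Fintype.card ι - #S) := by
        rw [Fintype.prod_ite_mem, prod_const, card_compl]

lemma card_filter_le_card_filter_forall_add_sum {α ι : Type*} [Fintype α] (P : α → Prop)
    [DecidablePred P] (S : Finset ι) (Q : ι → α → Prop) [∀ i, DecidablePred (Q i)] :
    #{x | P x} ≤ #{x | ∀ i ∈ S, Q i x} + ∑ i ∈ S, #{x | ¬Q i x ∧ P x} := by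
  classical
  have hcover : ({x | P x} : Finset α) ⊆
      ({x | ∀ i ∈ S, Q i x} : Finset α) ∪ S.biUnion fun i => {x | ¬Q i x ∧ P x} := by
    intro x hx
    by_cases hQ : ∀ i ∈ S, Q i x
    · exact mem_union_left _ (by simpa using hQ)
    · push Not at hQ
      obtain ⟨i, hi, hQi⟩ := hQ
      exact mem_union_right _ (mem_biUnion.mpr ⟨i, hi, by simp_all⟩)
  exact (card_le_card hcover).trans <|
    (card_union_le _ _).trans (Nat.add_le_add_left card_biUnion_le _)

variable {n : ℕ}

lemma bdist_zero_eq (f : (Fin n → Bool) → Bool) :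
    bdist f (fun _ => false) = #{x | f x = true} / 2 ^ n := by
  simp [bdist, prob_eq]

lemma osi_eq (i : Fin n) (f : (Fin n → Bool) → Bool) :
    osi i f = 2 * #{x | x i = false ∧ f x = true} / 2 ^ n := by
  have hcard : #{x : Fin n → Bool | x i = false} = 2 ^ (n - 1) := by
    have h := Fintype.card_filter_piFinset_const_eq_of_mem (univ : Finset Bool) i (mem_univ false)
    rwa [Fintype.piFinset_univ, card_univ, Fintype.card_bool, Fintype.card_fin] at h
  rw [osi, prob_eq, filter_filter, hcard, Nat.cast_pow, Nat.cast_ofNat, pow_sub₀ _ two_ne_zero i.pos]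
  field_simp
  ring

lemma cast_card_filter_forall_eq_true (S : Finset (Fin n)) :
    (#{x : Fin n → Bool | ∀ i ∈ S, x i = true} : ℝ) = 2 ^ n / 2 ^ #S := by
  have h : #{x : Fin n → Bool | ∀ i ∈ S, x i = true} = 2 ^ (n - #S) := by
    convert card_filter_forall_mem_eq S true <;> simp
  rw [h, Nat.cast_pow, Nat.cast_ofNat, pow_sub₀ _ two_ne_zero (by simpa using card_le_univ S),
    div_eq_mul_inv]

lemma bdist_zero_le_of_osi_le (f : (Fin n → Bool) → Bool) (S : Finset (Fin n)) (c : ℝ)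
    (hS : ∀ i ∈ S, osi i f ≤ c) :
    bdist f (fun _ => false) ≤ (2 ^ #S)⁻¹ + #S * c / 2 := by
  have hcover : #{x | f x = true} ≤
      #{x : Fin n → Bool | ∀ i ∈ S, x i = true} + ∑ i ∈ S, #{x | ¬x i = true ∧ f x = true} := by
    convert card_filter_le_card_filter_forall_add_sum (fun x => f x = true) S
      (fun i x => x i = true)
  have hslice : ∀ i ∈ S, (#{x | ¬x i = true ∧ f x = true} : ℝ) ≤ c * 2 ^ n / 2 := by
    intro i hi
    have := osi_eq i f ▸ hS i hi
    simp only [Bool.not_eq_true]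
    rw [div_le_iff₀ (by positivity)] at this
    linarith
  rw [bdist_zero_eq, div_le_iff₀ (by positivity)]
  calc (#{x | f x = true} : ℝ)
      ≤ #{x : Fin n → Bool | ∀ i ∈ S, x i = true} + ∑ i ∈ S, (#{x | ¬x i = true ∧ f x = true} : ℝ) := by
        exact_mod_cast hcover
    _ ≤ 2 ^ n / 2 ^ #S + ∑ i ∈ S, c * 2 ^ n / 2 := by
        gcongr with i hi
        · exact (cast_card_filter_forall_eq_true S).le
        · exact hslice i hi
    _ = ((2 ^ #S)⁻¹ + #S * c / 2) * 2 ^ n := by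
        rw [sum_const, nsmul_eq_mul]
        ring

lemma le_one_add_logb_inv {Δ : ℝ} (hΔ : 0 < Δ) {k : ℕ} (h : Δ * 2 ^ k ≤ 2) :
    (k : ℝ) ≤ 1 + Real.logb 2 (1 / Δ) := by
  have : (k : ℝ) ≤ Real.logb 2 (2 / Δ) := by
    rw [Real.le_logb_iff_rpow_le one_lt_two (by positivity), Real.rpow_natCast, le_div_iff₀ hΔ]
    linarith
  rw [Real.logb_div two_ne_zero hΔ.ne', Real.logb_self_eq_one one_lt_two] at this
  rw [one_div, Real.logb_inv]
  linarith

theorem few_small_ignorability_general (n : ℕ) (f : (Fin n → Bool) → Bool) (Δ : ℝ)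
    (hΔ0 : 0 < Δ) (hfar : Δ ≤ bdist f (fun _ => false)) :
    (((Finset.univ.filter (fun i : Fin n => osi i f ≤ Δ / (n:ℝ))).card : ℝ)) ≤
      1 + Real.logb 2 (1/Δ) := by
  set S := Finset.univ.filter (fun i : Fin n => osi i f ≤ Δ / (n:ℝ))
  have hbound := hfar.trans <| bdist_zero_le_of_osi_le f S _ fun i hi => (mem_filter.mp hi).2
  have hS : (#S : ℝ) * (Δ / n) ≤ Δ := by
    rw [mul_div_left_comm]
    refine mul_le_of_le_one_right hΔ0.le (div_le_one_of_le₀ ?_ n.cast_nonneg)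
    exact_mod_cast (card_le_univ S).trans_eq (Fintype.card_fin n)
  apply le_one_add_logb_inv hΔ0
  have hΔS : Δ ≤ 2 * (2 ^ #S)⁻¹ := by linarith
  calc Δ * 2 ^ #S ≤ 2 * (2 ^ #S)⁻¹ * 2 ^ #S := by gcongr
    _ = 2 := by field_simp

/-- a function far from zero has few voters with small ignorability. -/
theorem few_small_ignorability (n : ℕ) (f : (Fin n → Bool) → Bool) (Δ : ℝ)
    (hΔ0 : 0 < Δ) (hΔ1 : Δ ≤ 1) (hfar : Δ ≤ bdist f (fun _ => false)) :
    (((Finset.univ.filter (fun i : Fin n => osi i f ≤ Δ / (n:ℝ))).card : ℝ)) ≤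
      1 + Real.logb 2 (1/Δ) :=
  few_small_ignorability_general n f Δ hΔ0 hfar

end JudgementAggregation
end

section
/- Let f^1,…,f^m : {0,1}^n → {0,1} be functions each of which depends only on the coordinates in a coalition J ⊆ {1,…,n} (i.e., f^j(x) = f^j(y) whenever x_i = y_i for all i ∈ J). Then there exists a nonnegative integer C such that ĨC(f^1,…,f^m) = C·2^{−m|J|}. -/
/-!
Split each profile `x = (x^1, …, x^m)` into its coordinates inside `J` and outside `J`. The
outcome `f^1(x^1) ∧ ⋯ ∧ f^m(x^m)` and the `J`-coordinates of `x^1 ∧ ⋯ ∧ x^m` depend only on the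
inside part. So, for each fixed outside part, the mismatches of a completion `h` are those of a
completion of the restricted problem on `J`, hence at least its least mismatch count `C`; and a
completion that ignores the coordinates outside `J` attains `C` for every outside part at once.
The least number of mismatches is therefore `C · 2^(m(n - |J|))` out of `2^(mn)` profiles.
-/

namespace JudgementAggregation

open Finset

/-- Inconsistency index of `⟨f^1,…,f^m,h⟩` for the conjunction agenda over `m` premises:
`Pr_{x^1,…,x^m i.i.d. uniform}[ f^1(x^1) ∧ ⋯ ∧ f^m(x^m) ≠ h(x^1 ∧ ⋯ ∧ x^m) ]`. -/
noncomputable def ICand {m n : ℕ} (f : Fin m → (Fin n → Bool) → Bool)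
    (h : (Fin n → Bool) → Bool) : ℝ :=
  prob (Finset.univ : Finset (Fin m → Fin n → Bool)) (fun x =>
    decide (∀ j, f j (x j) = true) ≠ h (fun i => decide (∀ j, x j i = true)))

/-- `ĨC(f^1,…,f^m)`: minimal inconsistency index over all completions `h`. -/
noncomputable def ICmin {m n : ℕ} (f : Fin m → (Fin n → Bool) → Bool) : ℝ :=
  ⨅ h : (Fin n → Bool) → Bool, ICand f h

section Mismatch

variable {X Y : Type*} [Fintype X]

def mismatchCount (p : X → Bool) (u : X → Y) (h : Y → Bool) : ℕ :=
  #{x | p x ≠ h (u x)}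

theorem mismatchCount_congr_equiv {X' : Type*} [Fintype X'] (e : X ≃ X') {p : X → Bool}
    {p' : X' → Bool} {u : X → Y} {u' : X' → Y} (hp : ∀ x, p' (e x) = p x)
    (hu : ∀ x, u' (e x) = u x) (h : Y → Bool) :
    mismatchCount p u h = mismatchCount p' u' h := by
  refine Finset.card_equiv e fun x => ?_
  simp [hp, hu]

variable {A B Y₁ Y₂ : Type*} [Fintype A] [Fintype B]

theorem mismatchCount_prod_eq_sum (p : A → Bool) (u : A → Y₁) (v : B → Y₂)
    (σ : Y₁ × Y₂ → Y) (h : Y → Bool) :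
    mismatchCount (fun x : A × B => p x.1) (fun x => σ (u x.1, v x.2)) h =
      ∑ b, mismatchCount p u (fun y₁ => h (σ (y₁, v b))) := by
  simp only [mismatchCount, card_filter]
  rw [Fintype.sum_prod_type, Finset.sum_comm]

theorem exists_isLeast_mismatchCount_prod (p : A → Bool) (u : A → Y₁) (v : B → Y₂)
    (σ : Y₁ × Y₂ ≃ Y) :
    ∃ C : ℕ, IsLeast
      (Set.range (mismatchCount (fun x : A × B => p x.1) (fun x => σ (u x.1, v x.2))))
      (Fintype.card B * C) := by
  set g := Function.argmin (mismatchCount p u)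
  refine ⟨mismatchCount p u g, ⟨fun y => g (σ.symm y).1, ?_⟩, ?_⟩
  · simp [mismatchCount_prod_eq_sum]
  · rintro _ ⟨h, rfl⟩
    rw [mismatchCount_prod_eq_sum, ← smul_eq_mul, ← Finset.card_univ, ← Finset.sum_const]
    exact Finset.sum_le_sum fun b _ => Function.argmin_le _ _

end Mismatch

section Conjunction

variable {κ ι : Type*} [Fintype κ]

def conjAll (x : κ → ι → Bool) : ι → Bool := fun i => decide (∀ j, x j i = true)

def conjOutputs (f : κ → (ι → Bool) → Bool) (x : κ → ι → Bool) : Bool :=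
  decide (∀ j, f j (x j) = true)

variable [DecidableEq ι] (J : Finset ι)

abbrev splitCoords : (ι → Bool) ≃ ({i // i ∈ J} → Bool) × ({i // i ∉ J} → Bool) :=
  Equiv.piEquivPiSubtypeProd (· ∈ J) fun _ => Bool

def splitProfiles :
    (κ → ι → Bool) ≃ (κ → {i // i ∈ J} → Bool) × (κ → {i // i ∉ J} → Bool) :=
  (Equiv.piCongrRight fun _ => splitCoords J).trans (Equiv.arrowProdEquivProdArrow _ _ _)

theorem conjAll_eq_splitCoords_symm (x : κ → ι → Bool) :
    conjAll x = (splitCoords J).symm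
      (conjAll (splitProfiles J x).1, conjAll (splitProfiles J x).2) := by
  funext i
  by_cases hi : i ∈ J <;> simp [splitProfiles, conjAll, hi]

def restrictJunta (f : κ → (ι → Bool) → Bool) : κ → ({i // i ∈ J} → Bool) → Bool :=
  fun j a => f j ((splitCoords J).symm (a, fun _ => true))

theorem conjOutputs_eq_restrictJunta {f : κ → (ι → Bool) → Bool}
    (hf : ∀ j, ∀ x y : ι → Bool, (∀ i ∈ J, x i = y i) → f j x = f j y) (x : κ → ι → Bool) :
    conjOutputs f x = conjOutputs (restrictJunta J f) (splitProfiles J x).1 := by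
  simp only [conjOutputs, restrictJunta]
  refine decide_eq_decide.mpr (forall_congr' fun j => ?_)
  rw [hf j (x j) ((splitCoords J).symm ((splitProfiles J x).1 j, fun _ => true)) fun i hi => by
    simp [splitProfiles, hi]]

theorem mismatchCount_conjOutputs_eq_prod [Fintype ι] [DecidableEq κ] {f : κ → (ι → Bool) → Bool}
    (hf : ∀ j, ∀ x y : ι → Bool, (∀ i ∈ J, x i = y i) → f j x = f j y) :
    mismatchCount (conjOutputs f) conjAll =
      mismatchCount (fun x : (κ → {i // i ∈ J} → Bool) × (κ → {i // i ∉ J} → Bool) =>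
        conjOutputs (restrictJunta J f) x.1)
        (fun x => (splitCoords J).symm (conjAll x.1, conjAll x.2)) :=
  funext <| mismatchCount_congr_equiv (splitProfiles J)
    (fun x => (conjOutputs_eq_restrictJunta J hf x).symm)
    (fun x => (conjAll_eq_splitCoords_symm J x).symm)

theorem exists_isLeast_mismatchCount_conjOutputs [Fintype ι] [DecidableEq κ]
    {f : κ → (ι → Bool) → Bool}
    (hf : ∀ j, ∀ x y : ι → Bool, (∀ i ∈ J, x i = y i) → f j x = f j y) :
    ∃ C : ℕ, IsLeast (Set.range (mismatchCount (conjOutputs f) conjAll))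
      (Fintype.card (κ → {i // i ∉ J} → Bool) * C) := by
  rw [mismatchCount_conjOutputs_eq_prod J hf]
  exact exists_isLeast_mismatchCount_prod _ _ _ _

end Conjunction

theorem ICand_eq_mismatchCount {m n : ℕ} (f : Fin m → (Fin n → Bool) → Bool)
    (h : (Fin n → Bool) → Bool) :
    ICand f h = mismatchCount (conjOutputs f) conjAll h / Fintype.card (Fin m → Fin n → Bool) := by
  rw [ICand, prob, card_univ]
  unfold mismatchCount conjOutputs conjAll
  -- `congr!` reconciles the `Decidable` instances: classical in `prob`,
  -- `Nat.decidableForallFin` in `ICand`, `Fintype.decidableForallFintype` in `conjAll`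
  congr!

theorem ICmin_eq_of_isLeast {m n : ℕ} {f : Fin m → (Fin n → Bool) → Bool} {N : ℕ}
    (hN : IsLeast (Set.range (mismatchCount (conjOutputs f) conjAll)) N) :
    ICmin f = N / Fintype.card (Fin m → Fin n → Bool) := by
  obtain ⟨⟨h₀, hh₀⟩, hle⟩ := hN
  refine le_antisymm ?_ (le_ciInf fun h => ?_)
  · exact (ciInf_le (Set.finite_range _).bddBelow h₀).trans_eq (by rw [ICand_eq_mismatchCount, hh₀])
  · rw [ICand_eq_mismatchCount]
    gcongr
    exact_mod_cast hle ⟨h, rfl⟩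

/-- granularity of the minimal inconsistency index for juntas. -/
theorem ICmin_granularity (m n : ℕ) (J : Finset (Fin n))
    (f : Fin m → (Fin n → Bool) → Bool)
    (hdep : ∀ j, ∀ x y : Fin n → Bool, (∀ i ∈ J, x i = y i) → f j x = f j y) :
    ∃ C : ℕ, ICmin f = (C : ℝ) * (2:ℝ) ^ (-((m * J.card : ℕ) : ℤ)) := by
  obtain ⟨C, hC⟩ := exists_isLeast_mismatchCount_conjOutputs J hdep
  refine ⟨C, ?_⟩
  have hA : Fintype.card (Fin m → {i // i ∈ J} → Bool) = 2 ^ (m * #J) := by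
    simp [← pow_mul, mul_comm]
  have hB : (Fintype.card (Fin m → {i // i ∉ J} → Bool) : ℝ) ≠ 0 := by positivity
  rw [ICmin_eq_of_isLeast hC, Fintype.card_congr (splitProfiles J), Fintype.card_prod, hA,
    zpow_neg, zpow_natCast]
  push_cast
  field_simp

end JudgementAggregation
end
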